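/- Let W be a condensed wall with special vertices a, b and bottleneck vertices z_0, …, z_r, let L_1 be a ladder contained in W, let R be a rung at an end of L_1 with endvertices v_1 and v_2, let P_1 be a v_1–a path in W and P_2 a v_2–z path in W for some bottleneck vertex z (paths of length 0 allowed), such that P_1, P_2 and L_1 are pairwise internally disjoint and the union L = L_1 ∪ P_1 ∪ P_2 does not contain b. Then L_1 has at most 5 rungs. -/

import Mathlib

open SimpleGraph

/-- The elementary ladder with `n` rungs: vertices `(i, s)` for `i < n`, `s : Bool`;
the two stringers are the paths `(0,s), (1,s), …, (n-1,s)` and the rungs are the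
edges between `(i, false)` and `(i, true)`. -/
def elemLadder (n : ℕ) : SimpleGraph (Fin n × Bool) :=
  SimpleGraph.fromRel (fun x y =>
    (x.2 = y.2 ∧ (y.1 : ℕ) = (x.1 : ℕ) + 1) ∨ (x.1 = y.1 ∧ x.2 ≠ y.2))

/-- A subdivision copy of the graph `H` inside the graph `G`:  an injective choice of
branch vertices together with, for every edge of `H`, a path of `G` between the
corresponding branch vertices, such that distinct edge-paths meet only in common
branch endvertices and no branch vertex lies in the interior of an edge-path. -/
structure SubdivCopy {U V : Type} (H : SimpleGraph U) (G : SimpleGraph V) where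
  branch : U → V
  branch_inj : Function.Injective branch
  walk : ∀ ⦃a b : U⦄, H.Adj a b → G.Walk (branch a) (branch b)
  walk_isPath : ∀ ⦃a b : U⦄ (h : H.Adj a b), (walk h).IsPath
  walk_symm : ∀ ⦃a b : U⦄ (h : H.Adj a b), walk h.symm = (walk h).reverse
  walk_disj : ∀ ⦃a b a' b' : U⦄ (h : H.Adj a b) (h' : H.Adj a' b'), s(a, b) ≠ s(a', b') →
    ∀ x, x ∈ (walk h).support → x ∈ (walk h').support →
      (x = branch a ∨ x = branch b) ∧ (x = branch a' ∨ x = branch b')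
  branch_not_interior : ∀ ⦃a b : U⦄ (h : H.Adj a b) (c : U),
    branch c ∈ (walk h).support → c = a ∨ c = b

/-- The vertex set of a subdivision copy. -/
def SubdivCopy.verts {U V : Type} {H : SimpleGraph U} {G : SimpleGraph V}
    (S : SubdivCopy H G) : Set V :=
  Set.range S.branch ∪ {x | ∃ (a b : U) (h : H.Adj a b), x ∈ (S.walk h).support}

/-- The edge set of a subdivision copy. -/
def SubdivCopy.edges {U V : Type} {H : SimpleGraph U} {G : SimpleGraph V}
    (S : SubdivCopy H G) : Set (Sym2 V) :=
  {e | ∃ (a b : U) (h : H.Adj a b), e ∈ (S.walk h).edges}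

/-- `H` is a minor of `G`: there are nonempty, pairwise disjoint, connected branch
sets in `G`, one for each vertex of `H`, with an edge of `G` between the branch sets
of any two adjacent vertices of `H`. -/
def IsMinor {U V : Type} (H : SimpleGraph U) (G : SimpleGraph V) : Prop :=
  ∃ f : U → Set V,
    (∀ u, (f u).Nonempty) ∧
    (∀ u, (G.induce (f u)).Connected) ∧
    (∀ u u', u ≠ u' → Disjoint (f u) (f u')) ∧
    (∀ u u', H.Adj u u' → ∃ x ∈ f u, ∃ y ∈ f u', G.Adj x y)

/-- The vertex type of a condensed wall of size `r`: the path vertices `u^j_k`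
(`j` indexes the `r` horizontal paths, `k` the `2r` positions, both 0-indexed),
the bottleneck vertices `z_0, …, z_r`, and the two special vertices `a`, `b`. -/
def CWVert (r : ℕ) : Type := (Fin r × Fin (2 * r)) ⊕ (Fin (r + 1) ⊕ Bool)

/-- The path vertex `u^{j+1}_{k+1}` (so `j`, `k` are 0-indexed). -/
def cwU {r : ℕ} (j : Fin r) (k : Fin (2 * r)) : CWVert r := Sum.inl (j, k)

/-- The bottleneck vertex `z_i`. -/
def cwZ {r : ℕ} (i : Fin (r + 1)) : CWVert r := Sum.inr (Sum.inl i)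

/-- The special vertex `a` of the condensed wall. -/
def cwA (r : ℕ) : CWVert r := Sum.inr (Sum.inr false)

/-- The special vertex `b` of the condensed wall. -/
def cwB (r : ℕ) : CWVert r := Sum.inr (Sum.inr true)

/-- The vertex `c = z_0` of the condensed wall. -/
def cwC (r : ℕ) : CWVert r := cwZ (0 : Fin (r + 1))

/-- The vertex `d = z_r` of the condensed wall. -/
def cwD (r : ℕ) : CWVert r := cwZ (Fin.last r)

/-- The condensed wall of size `r`: for each `j ∈ [r]` a path `u^j_1 … u^j_{2r}`,
with `z_{j-1}` joined to the odd-position vertices and `z_j` to the even-position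
vertices of that path, consecutive `z`'s joined by an edge, `a` joined to all
`u^j_1` and `b` joined to all `u^j_{2r}`. -/
def condensedWall (r : ℕ) : SimpleGraph (CWVert r) :=
  SimpleGraph.fromRel (fun x y =>
    match x, y with
    | Sum.inl (j, k), Sum.inl (j', k') => j = j' ∧ (k' : ℕ) = (k : ℕ) + 1
    | Sum.inr (Sum.inl i), Sum.inr (Sum.inl i') => (i' : ℕ) = (i : ℕ) + 1
    | Sum.inr (Sum.inl i), Sum.inl (j, k) =>
        ((i : ℕ) = (j : ℕ) ∧ (k : ℕ) % 2 = 0) ∨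
        ((i : ℕ) = (j : ℕ) + 1 ∧ (k : ℕ) % 2 = 1)
    | Sum.inr (Sum.inr false), Sum.inl (_, k) => (k : ℕ) = 0
    | Sum.inr (Sum.inr true), Sum.inl (_, k) => (k : ℕ) + 1 = 2 * r
    | _, _ => False)

/-- A vertex of the condensed wall is a bottleneck vertex if it is one of the `z_i`. -/
def IsBottleneck {r : ℕ} (x : CWVert r) : Prop := ∃ i : Fin (r + 1), x = cwZ i

/-- The vertex set of the `j`-th layer of the condensed wall of size `r`
(0-indexed `j`): the vertices `u^j_1, …, u^j_{2r}` together with `z_{j-1}` and `z_j`. -/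
def layerVerts (r : ℕ) (j : Fin r) : Set (CWVert r) :=
  {x | (∃ k, x = cwU j k) ∨ x = cwZ j.castSucc ∨ x = cwZ j.succ}

/-- An X-wing in a graph `G` with designated vertices `a`, `b`, `c`, `d`: a ladder with
three rungs, two disjoint paths joining the endvertices of its first rung to `a` and
to `b`, and two further disjoint paths joining the endvertices of its last rung to `c`
and to `d`, all four paths internally disjoint from each other and from the ladder. -/
structure XWing {V : Type} (G : SimpleGraph V) (a b c d : V) where
  L : SubdivCopy (elemLadder 3) G
  Pa : G.Walk (L.branch (0, false)) a
  Pb : G.Walk (L.branch (0, true)) b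
  Pc : G.Walk (L.branch (2, false)) c
  Pd : G.Walk (L.branch (2, true)) d
  Pa_isPath : Pa.IsPath
  Pb_isPath : Pb.IsPath
  Pc_isPath : Pc.IsPath
  Pd_isPath : Pd.IsPath
  disj_ab : ∀ x, x ∈ Pa.support → x ∉ Pb.support
  disj_ac : ∀ x, x ∈ Pa.support → x ∉ Pc.support
  disj_ad : ∀ x, x ∈ Pa.support → x ∉ Pd.support
  disj_bc : ∀ x, x ∈ Pb.support → x ∉ Pc.support
  disj_bd : ∀ x, x ∈ Pb.support → x ∉ Pd.support
  disj_cd : ∀ x, x ∈ Pc.support → x ∉ Pd.support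
  Pa_L : ∀ x ∈ Pa.support, x ∈ L.verts → x = L.branch (0, false)
  Pb_L : ∀ x ∈ Pb.support, x ∈ L.verts → x = L.branch (0, true)
  Pc_L : ∀ x ∈ Pc.support, x ∈ L.verts → x = L.branch (2, false)
  Pd_L : ∀ x ∈ Pd.support, x ∈ L.verts → x = L.branch (2, true)

/-- The vertex set of an X-wing. -/
def XWing.wverts {V : Type} {G : SimpleGraph V} {a b c d : V} (X : XWing G a b c d) :
    Set V :=
  X.L.verts ∪ {x | x ∈ X.Pa.support} ∪ {x | x ∈ X.Pb.support} ∪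
    {x | x ∈ X.Pc.support} ∪ {x | x ∈ X.Pd.support}

/-- The edge set of an X-wing. -/
def XWing.wedges {V : Type} {G : SimpleGraph V} {a b c d : V} (X : XWing G a b c d) :
    Set (Sym2 V) :=
  X.L.edges ∪ {e | e ∈ X.Pa.edges} ∪ {e | e ∈ X.Pb.edges} ∪
    {e | e ∈ X.Pc.edges} ∪ {e | e ∈ X.Pd.edges}


/-!
Any two vertices of a cycle are joined inside it by two walks that meet only at their ends,
so a vertex through which all such walks pass is one of the two ends. Away from `a` and `b`,
the height `z_i ↦ 2i`, `u^{j+1}_k ↦ 2j+1` changes by at most one along every edge other than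
`z_i z_{i+1}`, so the even height `2i` is only reached through `z_i`. Hence a cycle of
`W - {a, b}` lies in one layer `u^{j+1} ∪ {z_j, z_{j+1}}`, and since the path `u^{j+1}` carries
no cycle, it passes through `z_j` or `z_{j+1}`.

Suppose the ladder had six rungs `0, …, 5`, counted from the end rung `R`. Its squares `0, …, 4`
are cycles avoiding `b`, and only square `0` can contain `a`: since `P₁` meets `L₁` only in
`v₁`, the vertex `a` could only be the corner `v₁` of square `0`. Consecutive squares share a
rung, hence a layer; the disjoint squares `2` and `4` then take up both bottleneck vertices of
that layer, which square `0`, disjoint from both, misses. So square `0` contains `a`. But both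
ends of rung `1` lie on the path `u^{j+1}` and can reach `a` inside square `0` only through
`u^{j+1}_1`, so both equal `u^{j+1}_1`.
-/

namespace SimpleGraph

variable {V : Type*} {G : SimpleGraph V}

def TwoLinked (G : SimpleGraph V) (C : Set V) : Prop :=
  ∀ v ∈ C, ∀ w ∈ C, ∃ p q : G.Walk v w, (∀ x ∈ p.support, x ∈ C) ∧ (∀ x ∈ q.support, x ∈ C) ∧
    ∀ x ∈ p.support, x ∈ q.support → x = v ∨ x = w

namespace Walk

theorem IsPath.start_notMem_support_tail {u v : V} {p : G.Walk u v} (hp : p.IsPath) :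
    u ∉ p.support.tail :=
  (List.nodup_cons.1 (p.cons_tail_support ▸ hp.support_nodup)).1

theorem twoLinked_support {u : V} (c : G.Walk u u) (hc : c.support.tail.Nodup) :
    G.TwoLinked {v | v ∈ c.support} := by
  classical
  intro v hv w hw
  have hc' : (c.rotate v hv).support.tail.Nodup := (c.support_rotate v hv).nodup_iff.2 hc
  have hw' : w ∈ (c.rotate v hv).support := (c.mem_support_rotate_iff v hv).2 hw
  set p := (c.rotate v hv).takeUntil w hw'
  set q := (c.rotate v hv).dropUntil w hw'
  have hsub : ∀ x, x ∈ p.support ∨ x ∈ q.support → x ∈ c.support := fun x hx =>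
    (c.mem_support_rotate_iff v hv).1 <| by
      rw [← (c.rotate v hv).take_spec hw', mem_support_append_iff]; exact hx
  refine ⟨p, q.reverse, fun x hx => hsub x (.inl hx), fun x hx => hsub x (.inr (by simpa using hx)),
    fun x hxp hxq => ?_⟩
  rw [support_reverse, List.mem_reverse] at hxq
  by_contra! hx
  have hnd : (p.support.tail ++ q.support.tail).Nodup := by
    rwa [← tail_support_append, take_spec]
  have hxp' : x ∈ p.support.tail := by
    rw [← cons_tail_support p, List.mem_cons] at hxp; exact hxp.resolve_left hx.1
  have hxq' : x ∈ q.support.tail := by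
    rw [← cons_tail_support q, List.mem_cons] at hxq; exact hxq.resolve_left hx.2
  exact List.disjoint_of_nodup_append hnd hxp' hxq'

theorem exists_mem_support_apply_eq {x y : V} (w : G.Walk x y) (f : V → ℕ) {m : ℕ}
    (hcross : ∀ d ∈ w.darts, f d.fst < m → m ≤ f d.snd → f d.snd = m)
    (hx : f x ≤ m) (hy : m ≤ f y) : ∃ v ∈ w.support, f v = m := by
  by_cases hxm : f x = m
  · exact ⟨x, w.start_mem_support, hxm⟩
  obtain ⟨d, hd, hd₁, hd₂⟩ :=
    w.exists_boundary_dart {v | f v < m} (lt_of_le_of_ne hx hxm) (not_lt.2 hy)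
  exact ⟨d.snd, w.dart_snd_mem_support_of_mem_darts hd, hcross d hd hd₁ (not_lt.1 hd₂)⟩

end Walk

namespace TwoLinked

variable {C : Set V}

theorem left_or_right_of_forall_walk (hC : G.TwoLinked C) {v w : V} (hv : v ∈ C) (hw : w ∈ C)
    (P : V → Prop) (hP : ∀ p : G.Walk v w, (∀ x ∈ p.support, x ∈ C) → ∃ x ∈ p.support, P x)
    (huniq : ∀ x ∈ C, ∀ y ∈ C, P x → P y → x = y) : P v ∨ P w := by
  obtain ⟨p, q, hpC, hqC, hpq⟩ := hC v hv w hw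
  obtain ⟨x, hxp, hPx⟩ := hP p hpC
  obtain ⟨y, hyq, hPy⟩ := hP q hqC
  obtain rfl := huniq x (hpC x hxp) y (hqC y hyq) hPx hPy
  rcases hpq x hxp hyq with rfl | rfl
  exacts [.inl hPx, .inr hPx]

theorem apply_eq_or_apply_eq (hC : G.TwoLinked C) (f : V → ℕ) {m : ℕ}
    (hcross : ∀ x ∈ C, ∀ y ∈ C, G.Adj x y → f x < m → m ≤ f y → f y = m)
    (huniq : ∀ x ∈ C, ∀ y ∈ C, f x = m → f y = m → x = y)
    {v w : V} (hv : v ∈ C) (hw : w ∈ C) (hvm : f v ≤ m) (hmw : m ≤ f w) : f v = m ∨ f w = m :=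
  hC.left_or_right_of_forall_walk hv hw (f · = m)
    (fun p hp => p.exists_mem_support_apply_eq f
      (fun d hd => hcross _ (hp _ (p.dart_fst_mem_support_of_mem_darts hd))
        _ (hp _ (p.dart_snd_mem_support_of_mem_darts hd)) d.adj) hvm hmw) huniq

theorem false_of_injOn (hC : G.TwoLinked C) (f : V → ℕ) (hf : Set.InjOn f C)
    (hcross : ∀ x ∈ C, ∀ y ∈ C, ∀ z ∈ C, G.Adj x y → f x < f z → f z ≤ f y → f y = f z)
    {x y z : V} (hx : x ∈ C) (hy : y ∈ C) (hz : z ∈ C) (hxy : x ≠ y) (hxz : x ≠ z)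
    (hyz : y ≠ z) : False := by
  have hne : ∀ {a b}, a ∈ C → b ∈ C → a ≠ b → f a ≠ f b := fun ha hb hab h => hab (hf ha hb h)
  have between : ∀ {a b c}, a ∈ C → b ∈ C → c ∈ C → f a ≤ f c → f c ≤ f b →
      f a = f c ∨ f b = f c := fun ha hb hc =>
    hC.apply_eq_or_apply_eq f (fun x hx y hy => hcross x hx y hy _ hc)
      (fun a ha b hb h h' => hf ha hb (h.trans h'.symm)) ha hb
  -- of three distinct values, one lies between the other two
  have := hne hx hy hxy; have := hne hx hz hxz; have := hne hy hz hyz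
  have := between hx hy hz; have := between hy hx hz
  have := between hx hz hy; have := between hz hx hy
  have := between hy hz hx; have := between hz hy hx
  omega

end TwoLinked

end SimpleGraph

namespace SubdivCopy

section

variable {U V : Type} {H : SimpleGraph U} {G : SimpleGraph V} (S : SubdivCopy H G)

theorem exists_eq_branch_of_mem_walk {a b a' b' : U} (h : H.Adj a b) (h' : H.Adj a' b')
    (hne : s(a, b) ≠ s(a', b')) {x : V} (hx : x ∈ (S.walk h).support)
    (hx' : x ∈ (S.walk h').support) :
    ∃ c, x = S.branch c ∧ (c = a ∨ c = b) ∧ (c = a' ∨ c = b') := by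
  obtain ⟨hab, hab'⟩ := S.walk_disj h h' hne x hx hx'
  rcases hab with rfl | rfl <;>
  · exact ⟨_, rfl, by simp, hab'.imp (fun h => S.branch_inj h) (fun h => S.branch_inj h)⟩

def mapWalk : ∀ {a b : U}, H.Walk a b → G.Walk (S.branch a) (S.branch b)
  | _, _, .nil => .nil
  | _, _, .cons h p => (S.walk h).append (mapWalk p)

theorem exists_of_mem_support_mapWalk {a b : U} {p : H.Walk a b} {x : V}
    (hx : x ∈ (S.mapWalk p).support) :
    (∃ c ∈ p.support, x = S.branch c) ∨ ∃ d ∈ p.darts, x ∈ (S.walk d.adj).support := by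
  induction p with
  | nil => simp_all [mapWalk]
  | cons h p ih =>
    rw [mapWalk, Walk.mem_support_append_iff] at hx
    rcases hx with hx | hx
    · exact .inr ⟨⟨(_, _), h⟩, by simp, hx⟩
    · rcases ih hx with ⟨c, hc, rfl⟩ | ⟨d, hd, hx⟩
      · exact .inl ⟨c, by simp [hc], rfl⟩
      · exact .inr ⟨d, by simp [hd], hx⟩

theorem branch_mem_support_mapWalk_iff {a b c : U} {p : H.Walk a b} :
    S.branch c ∈ (S.mapWalk p).support ↔ c ∈ p.support := by
  refine ⟨fun hc => ?_, fun hc => ?_⟩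
  · rcases S.exists_of_mem_support_mapWalk hc with ⟨c', hc', h⟩ | ⟨d, hd, h⟩
    · exact S.branch_inj h ▸ hc'
    · rcases S.branch_not_interior _ c h with rfl | rfl
      exacts [p.dart_fst_mem_support_of_mem_darts hd, p.dart_snd_mem_support_of_mem_darts hd]
  · induction p with
    | nil => simp_all [mapWalk]
    | cons h p ih =>
      rw [mapWalk, Walk.mem_support_append_iff]
      rcases List.mem_cons.1 (Walk.support_cons h p ▸ hc) with rfl | hc
      · exact .inl (S.walk h).start_mem_support
      · exact .inr (ih hc)

theorem mem_verts_of_mem_support_mapWalk {a b : U} {p : H.Walk a b} {x : V}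
    (hx : x ∈ (S.mapWalk p).support) : x ∈ S.verts := by
  rcases S.exists_of_mem_support_mapWalk hx with ⟨c, -, rfl⟩ | ⟨d, -, hx⟩
  exacts [.inl ⟨c, rfl⟩, .inr ⟨_, _, _, hx⟩]

theorem exists_eq_branch_of_mem_walk_of_mem_mapWalk {a b a' b' : U} (h : H.Adj a b)
    {p : H.Walk a' b'} (hp : s(a, b) ∉ p.edges) {x : V} (hx : x ∈ (S.walk h).support)
    (hxp : x ∈ (S.mapWalk p).support) : ∃ c ∈ p.support, x = S.branch c ∧ (c = a ∨ c = b) := by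
  rcases S.exists_of_mem_support_mapWalk hxp with ⟨c, hc, rfl⟩ | ⟨d, hd, hxd⟩
  · exact ⟨c, hc, rfl, S.branch_not_interior h c hx⟩
  · have hne : s(a, b) ≠ s(d.fst, d.snd) :=
      fun he => hp (he ▸ (List.mem_map_of_mem hd : d.edge ∈ p.edges))
    obtain ⟨c, rfl, hc, hc'⟩ := S.exists_eq_branch_of_mem_walk h d.adj hne hx hxd
    refine ⟨c, ?_, rfl, hc⟩
    rcases hc' with rfl | rfl
    exacts [p.dart_fst_mem_support_of_mem_darts hd, p.dart_snd_mem_support_of_mem_darts hd]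

theorem disjoint_support_mapWalk {a b a' b' : U} {p : H.Walk a b} {q : H.Walk a' b'}
    (hpq : ∀ c ∈ p.support, c ∉ q.support) {x : V} (hp : x ∈ (S.mapWalk p).support) :
    x ∉ (S.mapWalk q).support := by
  intro hq
  rcases S.exists_of_mem_support_mapWalk hp with ⟨c, hc, rfl⟩ | ⟨d, hd, hx⟩
  · exact hpq c hc (S.branch_mem_support_mapWalk_iff.1 hq)
  by_cases hdq : s(d.fst, d.snd) ∈ q.edges
  · exact hpq _ (p.dart_fst_mem_support_of_mem_darts hd) (q.fst_mem_support_of_mem_edges hdq)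
  obtain ⟨c, hc, -, rfl | rfl⟩ := S.exists_eq_branch_of_mem_walk_of_mem_mapWalk d.adj hdq hx hq
  exacts [hpq _ (p.dart_fst_mem_support_of_mem_darts hd) hc,
    hpq _ (p.dart_snd_mem_support_of_mem_darts hd) hc]

theorem isPath_mapWalk {a b : U} {p : H.Walk a b} (hp : p.IsPath) : (S.mapWalk p).IsPath := by
  induction p with
  | nil => exact Walk.IsPath.nil
  | @cons u v w h p ih =>
    rw [Walk.cons_isPath_iff] at hp
    have hmp := ih hp.1
    rw [mapWalk, Walk.isPath_def, Walk.support_append, List.nodup_append]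
    refine ⟨(S.walk_isPath h).support_nodup, hmp.support_nodup.tail, ?_⟩
    rintro x hx _ hxp rfl
    have huv : s(u, v) ∉ p.edges := fun he => hp.2 (p.fst_mem_support_of_mem_edges he)
    obtain ⟨c, hc, rfl, rfl | rfl⟩ :=
      S.exists_eq_branch_of_mem_walk_of_mem_mapWalk h huv hx (List.mem_of_mem_tail hxp)
    exacts [hp.2 hc, hmp.start_notMem_support_tail hxp]

theorem nodup_support_tail_mapWalk {a : U} {p : H.Walk a a} (hp : p.IsCycle) :
    (S.mapWalk p).support.tail.Nodup := by
  cases p with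
  | nil => exact List.nodup_nil
  | @cons _ v _ h p =>
    rw [Walk.cons_isCycle_iff] at hp
    have hmp := S.isPath_mapWalk hp.1
    rw [mapWalk, Walk.tail_support_append, List.nodup_append]
    refine ⟨(S.walk_isPath h).support_nodup.tail, hmp.support_nodup.tail, ?_⟩
    rintro x hx _ hxp rfl
    obtain ⟨c, -, rfl, rfl | rfl⟩ := S.exists_eq_branch_of_mem_walk_of_mem_mapWalk h hp.2
      (List.mem_of_mem_tail hx) (List.mem_of_mem_tail hxp)
    exacts [(S.walk_isPath h).start_notMem_support_tail hx, hmp.start_notMem_support_tail hxp]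

end

variable {U U' V : Type} {H : SimpleGraph U} {H' : SimpleGraph U'} {G : SimpleGraph V}

def comp (S : SubdivCopy H G) (f : H'.Copy H) : SubdivCopy H' G where
  branch := S.branch ∘ f
  branch_inj := S.branch_inj.comp f.injective
  walk _ _ h := S.walk (f.toHom.map_adj h)
  walk_isPath _ _ _ := S.walk_isPath _
  walk_symm _ _ h := S.walk_symm (f.toHom.map_adj h)
  walk_disj _ _ _ _ h h' hne := S.walk_disj _ _ fun he =>
    hne (Sym2.map.injective f.injective (by simpa using he))
  branch_not_interior _ _ h c hc :=
    (S.branch_not_interior _ (f c) hc).imp (fun h => f.injective h) (fun h => f.injective h)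

theorem verts_comp_subset (S : SubdivCopy H G) (f : H'.Copy H) :
    (S.comp f).verts ⊆ S.verts := by
  rintro x (⟨c, rfl⟩ | ⟨a, b, h, hx⟩)
  exacts [.inl ⟨f c, rfl⟩, .inr ⟨f a, f b, _, hx⟩]

end SubdivCopy

theorem elemLadder_adj {n : ℕ} {x y : Fin n × Bool} :
    (elemLadder n).Adj x y ↔ (x.2 = y.2 ∧ ((y.1 : ℕ) = x.1 + 1 ∨ (x.1 : ℕ) = y.1 + 1)) ∨
      (x.1 = y.1 ∧ x.2 ≠ y.2) := by
  obtain ⟨⟨i, hi⟩, b⟩ := x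
  obtain ⟨⟨j, hj⟩, c⟩ := y
  cases b <;> cases c <;> simp [elemLadder] <;> omega

theorem exists_copy_elemLadder {m n : ℕ} (hmn : m ≤ n) (hm : 0 < m) (i : Fin n)
    (hi : (i : ℕ) = 0 ∨ (i : ℕ) + 1 = n) (s : Bool) :
    ∃ f : (elemLadder m).Copy (elemLadder n), f (⟨0, hm⟩, false) = (i, s) := by
  let φ : Fin m → Fin n := fun k => ⟨if (i : ℕ) = 0 then k else n - 1 - k, by split_ifs <;> omega⟩
  have hφ : ∀ k k', ((φ k : ℕ) = φ k' + 1 ∨ (φ k' : ℕ) = φ k + 1) ↔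
      ((k : ℕ) = k' + 1 ∨ (k' : ℕ) = k + 1) := by
    intro k k'; simp only [φ]; split_ifs <;> omega
  have hφinj : Function.Injective φ := by
    intro k k' h; simp only [φ, Fin.mk.injEq] at h; split_ifs at h <;> ext <;> omega
  refine ⟨⟨⟨fun x => (φ x.1, x.2 ^^ s), fun {x y} h => ?_⟩, fun x y h => ?_⟩, ?_⟩
  · rw [elemLadder_adj] at h ⊢
    simp only [ne_eq, Bool.xor_left_inj, hφ]
    exact h.imp_right fun h => ⟨congrArg φ h.1, h.2⟩
  · obtain ⟨h₁, h₂⟩ := Prod.mk.inj h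
    exact Prod.ext (hφinj h₁) (by simpa using h₂)
  · show (φ ⟨0, hm⟩, false ^^ s) = (i, s)
    ext
    · simp only [φ]; split_ifs <;> omega
    · simp

namespace elemLadder

variable {n : ℕ}

theorem adj_rung (k : Fin n) (b : Bool) : (elemLadder n).Adj (k, b) (k, !b) := by
  simp [elemLadder_adj]

theorem adj_castSucc_succ (t : Fin n) (b : Bool) :
    (elemLadder (n + 1)).Adj (t.castSucc, b) (t.succ, b) := by
  simp [elemLadder_adj]

def cell (t : Fin n) : (elemLadder (n + 1)).Walk (t.castSucc, false) (t.castSucc, false) :=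
  .cons (adj_castSucc_succ t false) <| .cons (adj_rung t.succ false) <|
    .cons (adj_castSucc_succ t true).symm <| .cons (adj_rung t.castSucc true) .nil

theorem isCycle_cell (t : Fin n) : (cell t).IsCycle := by
  simp [cell, SimpleGraph.Walk.cons_isCycle_iff, SimpleGraph.Walk.cons_isPath_iff, Fin.ext_iff]

theorem mem_support_cell {t : Fin n} {x : Fin (n + 1) × Bool} :
    x ∈ (cell t).support ↔ x.1 = t.castSucc ∨ x.1 = t.succ := by
  obtain ⟨k, b⟩ := x
  cases b <;> simp [cell] <;> tauto

end elemLadder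

namespace SubdivCopy

variable {V : Type} {G : SimpleGraph V} {n : ℕ} (L : SubdivCopy (elemLadder (n + 1)) G)

def cellVerts (t : Fin n) : Set V := {x | x ∈ (L.mapWalk (elemLadder.cell t)).support}

theorem twoLinked_cellVerts (t : Fin n) : G.TwoLinked (L.cellVerts t) :=
  Walk.twoLinked_support _ (L.nodup_support_tail_mapWalk (elemLadder.isCycle_cell t))

theorem branch_mem_cellVerts_iff {t : Fin n} {k : Fin (n + 1)} {b : Bool} :
    L.branch (k, b) ∈ L.cellVerts t ↔ k = t.castSucc ∨ k = t.succ :=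
  L.branch_mem_support_mapWalk_iff.trans elemLadder.mem_support_cell

theorem disjoint_cellVerts {t t' : Fin n} (h : (t : ℕ) + 1 < t') :
    Disjoint (L.cellVerts t) (L.cellVerts t') :=
  Set.disjoint_left.2 fun _ hx => L.disjoint_support_mapWalk (fun c hc hc' => by
    rw [elemLadder.mem_support_cell] at hc hc'
    simp only [Fin.ext_iff, Fin.val_castSucc, Fin.val_succ] at hc hc'
    omega) hx

theorem cellVerts_subset_verts (t : Fin n) : L.cellVerts t ⊆ L.verts :=
  fun _ => L.mem_verts_of_mem_support_mapWalk

end SubdivCopy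

namespace CWVert

variable {r : ℕ}

-- `a` and `b` get the junk level `0`; they are excluded wherever `level` is used.
def level : CWVert r → ℕ
  | .inl (j, _) => 2 * j + 1
  | .inr (.inl i) => 2 * i
  | .inr (.inr _) => 0

def column : CWVert r → ℕ
  | .inl (_, k) => k
  | .inr _ => 0

@[simp] theorem level_cwU (j : Fin r) (k : Fin (2 * r)) : (cwU j k).level = 2 * j + 1 := rfl
@[simp] theorem level_cwZ (i : Fin (r + 1)) : (cwZ i : CWVert r).level = 2 * i := rfl
@[simp] theorem column_cwU (j : Fin r) (k : Fin (2 * r)) : (cwU j k).column = k := rfl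

theorem cwU_inj {j j' : Fin r} {k k' : Fin (2 * r)} : cwU j k = cwU j' k' ↔ j = j' ∧ k = k' :=
  ⟨fun h => Prod.mk.inj (Sum.inl.inj h), by rintro ⟨rfl, rfl⟩; rfl⟩

theorem cwZ_injective : Function.Injective (cwZ : Fin (r + 1) → CWVert r) :=
  fun _ _ h => Sum.inl.inj (Sum.inr.inj h)

theorem cwU_ne_cwZ (j : Fin r) (k : Fin (2 * r)) (i : Fin (r + 1)) : cwU j k ≠ cwZ i :=
  Sum.inl_ne_inr

theorem cwU_ne_cwA (j : Fin r) (k : Fin (2 * r)) : cwU j k ≠ cwA r :=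
  Sum.inl_ne_inr

theorem exists_eq_cwU_or_eq_cwZ {x : CWVert r} (ha : x ≠ cwA r) (hb : x ≠ cwB r) :
    (∃ j k, x = cwU j k) ∨ ∃ i, x = cwZ i := by
  rcases x with ⟨j, k⟩ | i | _ | _
  exacts [.inl ⟨j, k, rfl⟩, .inr ⟨i, rfl⟩, (ha rfl).elim, (hb rfl).elim]

theorem eq_of_level_eq {x y : CWVert r} (hxa : x ≠ cwA r) (hxb : x ≠ cwB r) (hya : y ≠ cwA r)
    (hyb : y ≠ cwB r) {m : ℕ} (hx : x.level = 2 * m) (hy : y.level = 2 * m) : x = y := by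
  obtain ⟨j, k, rfl⟩ | ⟨i, rfl⟩ := exists_eq_cwU_or_eq_cwZ hxa hxb <;>
    obtain ⟨j', k', rfl⟩ | ⟨i', rfl⟩ := exists_eq_cwU_or_eq_cwZ hya hyb <;>
    simp only [level_cwU, level_cwZ] at hx hy
  any_goals omega
  exact congrArg cwZ (Fin.ext (by omega))

theorem cwU_mem_layerVerts {j j' : Fin r} {k : Fin (2 * r)} :
    cwU j' k ∈ layerVerts r j ↔ j' = j := by
  refine ⟨?_, by rintro rfl; exact .inl ⟨k, rfl⟩⟩
  rintro (⟨k', h⟩ | h | h)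
  exacts [(cwU_inj.1 h).1, (cwU_ne_cwZ _ _ _ h).elim, (cwU_ne_cwZ _ _ _ h).elim]

theorem cwZ_mem_layerVerts {j : Fin r} {i : Fin (r + 1)} :
    cwZ i ∈ layerVerts r j ↔ (i : ℕ) = j ∨ (i : ℕ) = j + 1 := by
  refine ⟨?_, ?_⟩
  · rintro (⟨k, h⟩ | h | h)
    · exact (cwU_ne_cwZ _ _ _ h.symm).elim
    · exact .inl (by simp [cwZ_injective h])
    · exact .inr (by simp [cwZ_injective h])
  · rintro (h | h)
    · exact .inr (.inl (congrArg cwZ (Fin.ext h)))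
    · exact .inr (.inr (congrArg cwZ (Fin.ext h)))

theorem eq_of_mem_layerVerts {j j' : Fin r} {x y : CWVert r} (hxy : x ≠ y)
    (hx : x ∈ layerVerts r j) (hx' : x ∈ layerVerts r j') (hy : y ∈ layerVerts r j)
    (hy' : y ∈ layerVerts r j') : j = j' := by
  rcases hx with ⟨k, rfl⟩ | rfl | rfl
  · exact cwU_mem_layerVerts.1 hx'
  all_goals rcases hy with ⟨k, rfl⟩ | rfl | rfl
  all_goals first
    | exact cwU_mem_layerVerts.1 hy'
    | exact (hxy rfl).elim
    | rw [cwZ_mem_layerVerts] at hx' hy'; simp only [Fin.val_castSucc, Fin.val_succ] at hx' hy'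
      ext; omega

end CWVert

namespace condensedWall

open CWVert

variable {r : ℕ}

theorem level_eq_of_adj {x y : CWVert r} (h : (condensedWall r).Adj x y) (hxa : x ≠ cwA r)
    (hxb : x ≠ cwB r) {m : ℕ} (hx : x.level < 2 * m) (hy : 2 * m ≤ y.level) :
    y.level = 2 * m := by
  rw [condensedWall, SimpleGraph.fromRel_adj] at h
  obtain ⟨j, k, rfl⟩ | ⟨i, rfl⟩ := exists_eq_cwU_or_eq_cwZ hxa hxb <;>
    rcases y with ⟨j', k'⟩ | i' | _ | _ <;>
    simp [cwU, cwZ, level, Fin.ext_iff] at h hx hy ⊢ <;> omega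

theorem cwU_adj_cwU {j j' : Fin r} {k k' : Fin (2 * r)} :
    (condensedWall r).Adj (cwU j k) (cwU j' k') ↔
      j = j' ∧ ((k' : ℕ) = k + 1 ∨ (k : ℕ) = k' + 1) := by
  rw [condensedWall, SimpleGraph.fromRel_adj]
  refine ⟨fun ⟨_, h⟩ => by simp only [cwU] at h; omega, fun h => ⟨fun he => ?_, ?_⟩⟩
  · have := congrArg Fin.val (cwU_inj.1 he).2
    omega
  · simp only [cwU]
    omega

theorem exists_eq_cwU_or_of_adj {j : Fin r} {k : Fin (2 * r)} {y : CWVert r}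
    (h : (condensedWall r).Adj (cwU j k) y) :
    (∃ k', y = cwU j k') ∨ y = cwZ j.castSucc ∨ y = cwZ j.succ ∨ y = cwB r ∨
      (y = cwA r ∧ (k : ℕ) = 0) := by
  rw [condensedWall, SimpleGraph.fromRel_adj] at h
  rcases y with ⟨j', k'⟩ | i | _ | _ <;> simp only [cwU, false_or] at h
  · obtain rfl : j' = j := by omega
    exact .inl ⟨k', rfl⟩
  · rcases h.2 with ⟨hi, -⟩ | ⟨hi, -⟩
    · exact .inr (.inl (congrArg cwZ (Fin.ext hi)))
    · exact .inr (.inr (.inl (congrArg cwZ (Fin.ext hi))))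
  · exact .inr (.inr (.inr (.inr ⟨rfl, h.2⟩)))
  · exact .inr (.inr (.inr (.inl rfl)))

theorem cwU_mem_support_of_walk_cwA {j : Fin r} {k₀ : Fin (2 * r)} (hk₀ : (k₀ : ℕ) = 0)
    {x : CWVert r} (hx : ∃ k, x = cwU j k) (w : (condensedWall r).Walk x (cwA r))
    (hw : ∀ v ∈ w.support, v ≠ cwZ j.castSucc ∧ v ≠ cwZ j.succ ∧ v ≠ cwB r) :
    cwU j k₀ ∈ w.support := by
  obtain ⟨d, hd, ⟨k, hk⟩, hd₂⟩ :=
    w.exists_boundary_dart {v | ∃ k, v = cwU j k} hx fun ⟨k, hk⟩ => cwU_ne_cwA j k hk.symm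
  have hadj := d.adj
  rw [hk] at hadj
  obtain ⟨h₁, h₂, h₃⟩ := hw _ (w.dart_snd_mem_support_of_mem_darts hd)
  rcases exists_eq_cwU_or_of_adj hadj with h | h | h | h | ⟨-, hk0⟩
  · exact (hd₂ h).elim
  · exact (h₁ h).elim
  · exact (h₂ h).elim
  · exact (h₃ h).elim
  · rw [show k₀ = k from Fin.ext (hk₀.trans hk0.symm), ← hk]
    exact w.dart_fst_mem_support_of_mem_darts hd

theorem exists_cwU_mem_of_twoLinked {C : Set (CWVert r)} (hC : (condensedWall r).TwoLinked C)
    (ha : cwA r ∉ C) (hb : cwB r ∉ C) {x y v : CWVert r} (hx : x ∈ C) (hy : y ∈ C) (hv : v ∈ C)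
    (hxy : x ≠ y) (hxv : x ≠ v) (hyv : y ≠ v) : ∃ j k, cwU j k ∈ C := by
  by_contra! hno
  have hZ : ∀ u ∈ C, ∃ i, u = cwZ i := fun u hu =>
    (exists_eq_cwU_or_eq_cwZ (ne_of_mem_of_not_mem hu ha) (ne_of_mem_of_not_mem hu hb)).resolve_left
      fun ⟨j, k, h⟩ => hno j k (h ▸ hu)
  refine hC.false_of_injOn level (fun p hp q hq h => ?_) (fun p hp q _ w hw hpq h₁ h₂ => ?_)
    hx hy hv hxy hxv hyv
  · obtain ⟨i, rfl⟩ := hZ p hp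
    obtain ⟨i', rfl⟩ := hZ q hq
    simp only [level_cwZ] at h
    exact congrArg cwZ (Fin.ext (by omega))
  · obtain ⟨i, rfl⟩ := hZ w hw
    rw [level_cwZ] at h₁ h₂ ⊢
    exact level_eq_of_adj hpq (ne_of_mem_of_not_mem hp ha) (ne_of_mem_of_not_mem hp hb) h₁ h₂

theorem exists_layerVerts_of_twoLinked {C : Set (CWVert r)}
    (hC : (condensedWall r).TwoLinked C) (ha : cwA r ∉ C) (hb : cwB r ∉ C) {x y v : CWVert r}
    (hx : x ∈ C) (hy : y ∈ C) (hv : v ∈ C) (hxy : x ≠ y) (hxv : x ≠ v) (hyv : y ≠ v) :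
    ∃ j, C ⊆ layerVerts r j ∧ (cwZ j.castSucc ∈ C ∨ cwZ j.succ ∈ C) := by
  have hab : ∀ u ∈ C, u ≠ cwA r ∧ u ≠ cwB r := fun u hu =>
    ⟨ne_of_mem_of_not_mem hu ha, ne_of_mem_of_not_mem hu hb⟩
  have between : ∀ p ∈ C, ∀ q ∈ C, ∀ m, p.level ≤ 2 * m → 2 * m ≤ q.level →
      p.level = 2 * m ∨ q.level = 2 * m := fun p hp q hq m =>
    hC.apply_eq_or_apply_eq level
      (fun x hx y _ hxy => level_eq_of_adj hxy (hab x hx).1 (hab x hx).2)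
      (fun x hx y hy => eq_of_level_eq (hab x hx).1 (hab x hx).2 (hab y hy).1 (hab y hy).2) hp hq
  obtain ⟨j, k, hu⟩ := exists_cwU_mem_of_twoLinked hC ha hb hx hy hv hxy hxv hyv
  have hlayer : C ⊆ layerVerts r j := fun w hw => by
    have h₁ := between w hw _ hu j
    have h₂ := between _ hu w hw (j + 1)
    obtain ⟨j', k', rfl⟩ | ⟨i, rfl⟩ := exists_eq_cwU_or_eq_cwZ (hab w hw).1 (hab w hw).2 <;>
      simp only [level_cwU, level_cwZ] at h₁ h₂
    · exact cwU_mem_layerVerts.2 (Fin.ext (by omega))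
    · exact cwZ_mem_layerVerts.2 (by omega)
  refine ⟨j, hlayer, ?_⟩
  by_contra! hz
  have hrow : ∀ w ∈ C, ∃ k, w = cwU j k := fun w hw =>
    (hlayer hw).resolve_right fun h => h.elim (fun h => hz.1 (h ▸ hw)) fun h => hz.2 (h ▸ hw)
  refine hC.false_of_injOn column (fun p hp q hq h => ?_) (fun p hp q hq w hw hpq h₁ h₂ => ?_)
    hx hy hv hxy hxv hyv
  · obtain ⟨k, rfl⟩ := hrow p hp
    obtain ⟨k', rfl⟩ := hrow q hq
    rw [column_cwU, column_cwU] at h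
    rw [Fin.ext h]
  · obtain ⟨k, rfl⟩ := hrow p hp
    obtain ⟨k', rfl⟩ := hrow q hq
    obtain ⟨k'', rfl⟩ := hrow w hw
    have := (cwU_adj_cwU.1 hpq).2
    simp only [column_cwU] at h₁ h₂ ⊢
    omega

theorem eq_cwU_of_twoLinked_of_cwA_mem {C : Set (CWVert r)} (hC : (condensedWall r).TwoLinked C)
    (ha : cwA r ∈ C) (hb : cwB r ∉ C) {j : Fin r} (hz : cwZ j.castSucc ∉ C)
    (hz' : cwZ j.succ ∉ C) {k₀ : Fin (2 * r)} (hk₀ : (k₀ : ℕ) = 0) {x : CWVert r} (hxC : x ∈ C)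
    (hx : ∃ k, x = cwU j k) : x = cwU j k₀ :=
  (hC.left_or_right_of_forall_walk hxC ha (· = cwU j k₀)
    (fun p hp => ⟨_, cwU_mem_support_of_walk_cwA hk₀ hx p fun v hv =>
      ⟨ne_of_mem_of_not_mem (hp v hv) hz, ne_of_mem_of_not_mem (hp v hv) hz',
        ne_of_mem_of_not_mem (hp v hv) hb⟩, rfl⟩)
    fun _ _ _ _ hx hy => hx.trans hy.symm).resolve_right fun h => cwU_ne_cwA j k₀ h.symm

section

variable {n : ℕ} (L : SubdivCopy (elemLadder (n + 1)) (condensedWall r))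

theorem exists_cellVerts_subset_layerVerts (t : Fin n) (ha : cwA r ∉ L.cellVerts t)
    (hb : cwB r ∉ L.cellVerts t) :
    ∃ j, L.cellVerts t ⊆ layerVerts r j ∧
      (cwZ j.castSucc ∈ L.cellVerts t ∨ cwZ j.succ ∈ L.cellVerts t) :=
  exists_layerVerts_of_twoLinked (L.twoLinked_cellVerts t) ha hb
    (x := L.branch (t.castSucc, false)) (y := L.branch (t.castSucc, true))
    (v := L.branch (t.succ, false)) (L.branch_mem_cellVerts_iff.2 (.inl rfl))
    (L.branch_mem_cellVerts_iff.2 (.inl rfl)) (L.branch_mem_cellVerts_iff.2 (.inr rfl))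
    (L.branch_inj.ne (by simp)) (L.branch_inj.ne (by simp [Fin.ext_iff]))
    (L.branch_inj.ne (by simp [Fin.ext_iff]))

theorem eq_of_cellVerts_subset_layerVerts {t t' : Fin n} (htt' : (t : ℕ) + 1 = t') {j j' : Fin r}
    (h : L.cellVerts t ⊆ layerVerts r j) (h' : L.cellVerts t' ⊆ layerVerts r j') : j = j' := by
  have hmem : ∀ b, L.branch (t.succ, b) ∈ L.cellVerts t ∩ L.cellVerts t' := fun b =>
    ⟨L.branch_mem_cellVerts_iff.2 (.inr rfl),
      L.branch_mem_cellVerts_iff.2 (.inl (Fin.ext (by simp [htt'])))⟩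
  exact eq_of_mem_layerVerts (L.branch_inj.ne (by simp)) (h (hmem false).1) (h' (hmem false).2)
    (h (hmem true).1) (h' (hmem true).2)

end

theorem false_of_ladder_six (L : SubdivCopy (elemLadder 6) (condensedWall r))
    (hb : cwB r ∉ L.verts) (ha : cwA r ∈ L.verts → cwA r = L.branch (0, false)) : False := by
  have hbC : ∀ t, cwB r ∉ L.cellVerts t := fun t h => hb (L.cellVerts_subset_verts t h)
  have haC : ∀ t : Fin 5, t ≠ 0 → cwA r ∉ L.cellVerts t := fun t ht h => by
    have := L.branch_mem_cellVerts_iff.1 (ha (L.cellVerts_subset_verts t h) ▸ h)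
    simp only [Fin.ext_iff, Fin.val_castSucc, Fin.val_succ] at this ht
    omega
  obtain ⟨j, hj₁, -⟩ := exists_cellVerts_subset_layerVerts L 1 (haC 1 (by decide)) (hbC 1)
  obtain ⟨j₂, hj₂, hz₂⟩ := exists_cellVerts_subset_layerVerts L 2 (haC 2 (by decide)) (hbC 2)
  obtain ⟨j₃, hj₃, -⟩ := exists_cellVerts_subset_layerVerts L 3 (haC 3 (by decide)) (hbC 3)
  obtain ⟨j₄, hj₄, hz₄⟩ := exists_cellVerts_subset_layerVerts L 4 (haC 4 (by decide)) (hbC 4)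
  obtain rfl : j = j₂ := eq_of_cellVerts_subset_layerVerts L rfl hj₁ hj₂
  obtain rfl : j = j₃ := eq_of_cellVerts_subset_layerVerts L rfl hj₂ hj₃
  obtain rfl : j = j₄ := eq_of_cellVerts_subset_layerVerts L rfl hj₃ hj₄
  have hz₀ : cwZ j.castSucc ∉ L.cellVerts 0 ∧ cwZ j.succ ∉ L.cellVerts 0 := by
    have d₀₂ := Set.disjoint_left.1 (L.disjoint_cellVerts (t := 0) (t' := 2) (by decide))
    have d₀₄ := Set.disjoint_left.1 (L.disjoint_cellVerts (t := 0) (t' := 4) (by decide))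
    have d₂₄ := Set.disjoint_left.1 (L.disjoint_cellVerts (t := 2) (t' := 4) (by decide))
    constructor <;> intro h <;> rcases hz₂ with h₂ | h₂ <;> rcases hz₄ with h₄ | h₄
    all_goals first | exact d₀₂ h h₂ | exact d₀₄ h h₄ | exact d₂₄ h₂ h₄
  by_cases ha₀ : cwA r ∈ L.cellVerts 0
  · obtain ⟨k₀, hk₀⟩ : ∃ k₀ : Fin (2 * r), (k₀ : ℕ) = 0 := ⟨⟨0, by have := j.pos; omega⟩, rfl⟩
    have hrung : ∀ c, L.branch (1, c) = cwU j k₀ := fun c => by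
      have h₀ : L.branch (1, c) ∈ L.cellVerts 0 := L.branch_mem_cellVerts_iff.2 (.inr rfl)
      refine eq_cwU_of_twoLinked_of_cwA_mem (L.twoLinked_cellVerts 0) ha₀ (hbC 0) hz₀.1 hz₀.2
        hk₀ h₀ ?_
      rcases hj₁ (L.branch_mem_cellVerts_iff.2 (.inl rfl) : L.branch (1, c) ∈ L.cellVerts 1)
        with h | h | h
      exacts [h, (hz₀.1 (h ▸ h₀)).elim, (hz₀.2 (h ▸ h₀)).elim]
    exact absurd (L.branch_inj ((hrung false).trans (hrung true).symm)) (by simp)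
  · obtain ⟨j₀, hj₀, hz⟩ := exists_cellVerts_subset_layerVerts L 0 ha₀ (hbC 0)
    obtain rfl : j₀ = j := eq_of_cellVerts_subset_layerVerts L rfl hj₀ hj₁
    exact hz.elim hz₀.1 hz₀.2

end condensedWall

theorem ladder_with_az_paths_le_five_general (r n : ℕ)
    (S : SubdivCopy (elemLadder n) (condensedWall r)) (i : Fin n) (s : Bool)
    (hi : (i : ℕ) = 0 ∨ (i : ℕ) + 1 = n)
    (P₁ : (condensedWall r).Walk (S.branch (i, s)) (cwA r))
    (hP₁L : ∀ x, x ∈ P₁.support → x ∈ S.verts → x = S.branch (i, s))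
    (hbL : cwB r ∉ S.verts) :
    n ≤ 5 := by
  by_contra! hn
  obtain ⟨f, hf⟩ := exists_copy_elemLadder hn (by norm_num) i hi s
  refine condensedWall.false_of_ladder_six (S.comp f) (fun h => hbL (S.verts_comp_subset f h))
    fun ha => ?_
  have h : (S.comp f).branch (0, false) = S.branch (i, s) := congrArg S.branch hf
  exact h ▸ hP₁L _ P₁.end_mem_support (S.verts_comp_subset f ha)

/-- A ladder in a condensed wall whose two stringers are continued at one end-rung by
internally disjoint paths to `a` and to a bottleneck vertex `z`, the whole
configuration avoiding `b`, has at most 5 rungs. -/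
theorem ladder_with_az_paths_le_five (r n : ℕ)
    (S : SubdivCopy (elemLadder n) (condensedWall r)) (i : Fin n) (s : Bool)
    (hi : (i : ℕ) = 0 ∨ (i : ℕ) + 1 = n)
    (z : CWVert r) (hz : IsBottleneck z)
    (P₁ : (condensedWall r).Walk (S.branch (i, s)) (cwA r))
    (P₂ : (condensedWall r).Walk (S.branch (i, !s)) z)
    (hP₁ : P₁.IsPath) (hP₂ : P₂.IsPath)
    (hP₁L : ∀ x, x ∈ P₁.support → x ∈ S.verts → x = S.branch (i, s))
    (hP₂L : ∀ x, x ∈ P₂.support → x ∈ S.verts → x = S.branch (i, !s))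
    (hP₁₂ : ∀ x, x ∈ P₁.support → x ∉ P₂.support)
    (hbL : cwB r ∉ S.verts) (hbP₁ : cwB r ∉ P₁.support) (hbP₂ : cwB r ∉ P₂.support) :
    n ≤ 5 :=
  ladder_with_az_paths_le_five_general r n S i s hi P₁ hP₁L hbL
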